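/- arXiv:2509.07719 — 5 statements merged into one kernel-verified Lean document; each statement's English description precedes it below -/
import Mathlib

section
/- Let i : (C', J') → (C, J) be a dense morphism of sites between sites, and let F' : (D', K') → (C', J') be a functor. Then F' is a continuous functor if and only if the composite i ∘ F' : (D', K') → (C, J) is a continuous functor. -/
/-!
Pulling back along a dense morphism of sites is an equivalence of sheaf categories, so every
`J'`-sheaf is, up to isomorphism, the restriction along `i` of a `J`-sheaf. Hence testing
`F'` against all `J'`-sheaves is the same as testing `F' ⋙ i` against all `J`-sheaves.
-/

open CategoryTheory CategoryTheory.Limits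

universe u

namespace Statement0

/-- A functor between sites is *continuous* if precomposition with it sends sheaves of types
to sheaves. -/
def ContinuousFunctor {C₁ C₂ : Type*} [Category C₁] [Category C₂]
    (F : C₁ ⥤ C₂) (J₁ : GrothendieckTopology C₁) (J₂ : GrothendieckTopology C₂) : Prop :=
  ∀ G : C₂ᵒᵖ ⥤ Type u, Presheaf.IsSheaf J₂ G → Presheaf.IsSheaf J₁ (F.op ⋙ G)

/-- The direct image functor (precomposition, restricted to sheaves) of a continuous functor. -/
def pushforward {C₁ C₂ : Type*} [Category C₁] [Category C₂] (F : C₁ ⥤ C₂)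
    (J₁ : GrothendieckTopology C₁) (J₂ : GrothendieckTopology C₂)
    (h : ContinuousFunctor.{u} F J₁ J₂) : Sheaf J₂ (Type u) ⥤ Sheaf J₁ (Type u) where
  obj G := ⟨F.op ⋙ G.val, h G.val G.cond⟩
  map f := ⟨Functor.whiskerLeft F.op f.hom⟩

/-- A continuous functor is a *morphism of sites* if its direct image functor admits a
left adjoint (the sheafified left Kan extension) which preserves finite limits. -/
def IsMorphismOfSites {C₁ C₂ : Type*} [Category C₁] [Category C₂] (F : C₁ ⥤ C₂)
    (J₁ : GrothendieckTopology C₁) (J₂ : GrothendieckTopology C₂) : Prop :=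
  ∃ h : ContinuousFunctor.{u} F J₁ J₂,
    ∃ (L : Sheaf J₁ (Type u) ⥤ Sheaf J₂ (Type u)) (_ : L ⊣ pushforward F J₁ J₂ h),
      PreservesFiniteLimits L

/-- A morphism of sites is *dense* if its direct image functor is an equivalence. -/
def IsDenseMorphismOfSites {C₁ C₂ : Type*} [Category C₁] [Category C₂] (F : C₁ ⥤ C₂)
    (J₁ : GrothendieckTopology C₁) (J₂ : GrothendieckTopology C₂) : Prop :=
  IsMorphismOfSites.{u} F J₁ J₂ ∧
    ∃ h : ContinuousFunctor.{u} F J₁ J₂, (pushforward F J₁ J₂ h).IsEquivalence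

section

variable {C₁ C₂ C₃ : Type*} [Category C₁] [Category C₂] [Category C₃]
  {J₁ : GrothendieckTopology C₁} {J₂ : GrothendieckTopology C₂} {J₃ : GrothendieckTopology C₃}

theorem ContinuousFunctor.comp {F : C₁ ⥤ C₂} {G : C₂ ⥤ C₃}
    (hF : ContinuousFunctor.{u} F J₁ J₂) (hG : ContinuousFunctor.{u} G J₂ J₃) :
    ContinuousFunctor.{u} (F ⋙ G) J₁ J₃ :=
  fun P hP => hF (G.op ⋙ P) (hG P hP)

theorem ContinuousFunctor.of_comp_of_essSurj {F : C₁ ⥤ C₂} {G : C₂ ⥤ C₃}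
    (hG : ContinuousFunctor.{u} G J₂ J₃) [(pushforward G J₂ J₃ hG).EssSurj]
    (hFG : ContinuousFunctor.{u} (F ⋙ G) J₁ J₃) : ContinuousFunctor.{u} F J₁ J₂ := by
  intro P hP
  let Q := (pushforward G J₂ J₃ hG).objPreimage ⟨P, hP⟩
  have e : G.op ⋙ Q.obj ≅ P :=
    (sheafToPresheaf J₂ (Type u)).mapIso ((pushforward G J₂ J₃ hG).objObjPreimageIso ⟨P, hP⟩)
  exact (Presheaf.isSheaf_of_iso_iff (F.op.isoWhiskerLeft e)).1 (hFG Q.obj Q.property)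

end

theorem statement0 {C' C D' : Type u} [SmallCategory C'] [SmallCategory C] [SmallCategory D']
    (J' : GrothendieckTopology C') (J : GrothendieckTopology C)
    (K' : GrothendieckTopology D') (i : C' ⥤ C)
    (hi : IsDenseMorphismOfSites.{u} i J' J) (F' : D' ⥤ C') :
    ContinuousFunctor.{u} F' K' J' ↔ ContinuousFunctor.{u} (F' ⋙ i) K' J := by
  obtain ⟨-, hic, _⟩ := hi
  exact ⟨fun hF => hF.comp hic, ContinuousFunctor.of_comp_of_essSurj hic⟩

end Statement0
end

section
/- Let i : (C', J') → (C, J) be a dense morphism of sites and let F : (C, J) → (D, K) be a continuous functor. Then F is a morphism of sites if and only if the composite F ∘ i : (C', J') → (D, K) is a morphism of sites. -/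
/-!
Precomposition with `i ⋙ F` is precomposition with `F` followed by precomposition with `i`,
so the direct image of `i ⋙ F` is that of `F` followed by the equivalence `Sh(i)_*`.
Composing with an equivalence does not change whether a functor has a left exact left adjoint:
transport the left adjoint along the equivalence, which preserves all limits.
-/

open CategoryTheory CategoryTheory.Limits

universe u

namespace Statement1

/-- A functor between sites is *continuous* if precomposition with it sends sheaves of types
to sheaves. -/
def ContinuousFunctor {C₁ C₂ : Type*} [Category C₁] [Category C₂]
    (F : C₁ ⥤ C₂) (J₁ : GrothendieckTopology C₁) (J₂ : GrothendieckTopology C₂) : Prop :=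
  ∀ G : C₂ᵒᵖ ⥤ Type u, Presheaf.IsSheaf J₂ G → Presheaf.IsSheaf J₁ (F.op ⋙ G)

/-- The direct image functor (precomposition, restricted to sheaves) of a continuous functor. -/
def pushforward {C₁ C₂ : Type*} [Category C₁] [Category C₂] (F : C₁ ⥤ C₂)
    (J₁ : GrothendieckTopology C₁) (J₂ : GrothendieckTopology C₂)
    (h : ContinuousFunctor.{u} F J₁ J₂) : Sheaf J₂ (Type u) ⥤ Sheaf J₁ (Type u) where
  obj G := ⟨F.op ⋙ G.val, h G.val G.cond⟩
  map f := ⟨Functor.whiskerLeft F.op f.hom⟩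

/-- A continuous functor is a *morphism of sites* if its direct image functor admits a
left adjoint (the sheafified left Kan extension) which preserves finite limits. -/
def IsMorphismOfSites {C₁ C₂ : Type*} [Category C₁] [Category C₂] (F : C₁ ⥤ C₂)
    (J₁ : GrothendieckTopology C₁) (J₂ : GrothendieckTopology C₂) : Prop :=
  ∃ h : ContinuousFunctor.{u} F J₁ J₂,
    ∃ (L : Sheaf J₁ (Type u) ⥤ Sheaf J₂ (Type u)) (_ : L ⊣ pushforward F J₁ J₂ h),
      PreservesFiniteLimits L

/-- A morphism of sites is *dense* if its direct image functor is an equivalence. -/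
def IsDenseMorphismOfSites {C₁ C₂ : Type*} [Category C₁] [Category C₂] (F : C₁ ⥤ C₂)
    (J₁ : GrothendieckTopology C₁) (J₂ : GrothendieckTopology C₂) : Prop :=
  IsMorphismOfSites.{u} F J₁ J₂ ∧
    ∃ h : ContinuousFunctor.{u} F J₁ J₂, (pushforward F J₁ J₂ h).IsEquivalence

def HasLeftExactLeftAdjoint {X A : Type*} [Category X] [Category A] (R : X ⥤ A) : Prop :=
  ∃ (L : A ⥤ X) (_ : L ⊣ R), PreservesFiniteLimits L

theorem hasLeftExactLeftAdjoint_comp_equivalence_iff {X A B : Type*} [Category X] [Category A]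
    [Category B] (R : X ⥤ A) (P : A ⥤ B) [P.IsEquivalence] :
    HasLeftExactLeftAdjoint (R ⋙ P) ↔ HasLeftExactLeftAdjoint R := by
  constructor
  · rintro ⟨L, adj, hL⟩
    refine ⟨P ⋙ L, (P.asEquivalence.toAdjunction.comp adj).ofNatIsoRight ?_,
      comp_preservesFiniteLimits _ _⟩
    exact Functor.associator _ _ _ ≪≫ Functor.isoWhiskerLeft R P.asEquivalence.unitIso.symm ≪≫
      Functor.rightUnitor R
  · rintro ⟨L, adj, hL⟩
    exact ⟨P.inv ⋙ L, P.asEquivalence.symm.toAdjunction.comp adj, comp_preservesFiniteLimits _ _⟩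

section

variable {C₁ C₂ C₃ : Type*} [Category C₁] [Category C₂] [Category C₃]
  {J₁ : GrothendieckTopology C₁} {J₂ : GrothendieckTopology C₂} {J₃ : GrothendieckTopology C₃}

theorem ContinuousFunctor.comp {F : C₁ ⥤ C₂} {G : C₂ ⥤ C₃} (hF : ContinuousFunctor.{u} F J₁ J₂)
    (hG : ContinuousFunctor.{u} G J₂ J₃) : ContinuousFunctor.{u} (F ⋙ G) J₁ J₃ :=
  fun P hP => hF (G.op ⋙ P) (hG P hP)

theorem pushforward_comp {F : C₁ ⥤ C₂} {G : C₂ ⥤ C₃} (hF : ContinuousFunctor.{u} F J₁ J₂)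
    (hG : ContinuousFunctor.{u} G J₂ J₃) :
    pushforward (F ⋙ G) J₁ J₃ (hF.comp hG) = pushforward G J₂ J₃ hG ⋙ pushforward F J₁ J₂ hF :=
  rfl

theorem isMorphismOfSites_iff {F : C₁ ⥤ C₂} (hF : ContinuousFunctor.{u} F J₁ J₂) :
    IsMorphismOfSites.{u} F J₁ J₂ ↔ HasLeftExactLeftAdjoint (pushforward F J₁ J₂ hF) :=
  ⟨fun ⟨_, h⟩ => h, fun h => ⟨hF, h⟩⟩

end

theorem statement1 {C' C D : Type u} [SmallCategory C'] [SmallCategory C] [SmallCategory D]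
    (J' : GrothendieckTopology C') (J : GrothendieckTopology C)
    (K : GrothendieckTopology D) (i : C' ⥤ C)
    (hi : IsDenseMorphismOfSites.{u} i J' J) (F : C ⥤ D)
    (hF : ContinuousFunctor.{u} F J K) :
    IsMorphismOfSites.{u} F J K ↔ IsMorphismOfSites.{u} (i ⋙ F) J' K := by
  obtain ⟨-, hic, _⟩ := hi
  rw [isMorphismOfSites_iff hF, isMorphismOfSites_iff (hic.comp hF), pushforward_comp hic hF,
    hasLeftExactLeftAdjoint_comp_equivalence_iff _ (pushforward i J' J hic)]

end Statement1
end

section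
/- Let i : (C', J') → (C, J) be a dense morphism of sites and let F' : (D', K') → (C', J') be a functor. Then F' is a morphism of sites if and only if the composite i ∘ F' : (D', K') → (C, J) is a morphism of sites. -/
/-!
Since `Sh(i)_*` is an equivalence, precomposing a direct image functor with it neither creates
nor destroys a left adjoint preserving finite limits; and continuity of `F'` follows from that of
`i ∘ F'`, because every `J'`-sheaf is, up to isomorphism, the restriction along `i` of a `J`-sheaf.
-/

open CategoryTheory CategoryTheory.Limits

universe u

namespace Statement2

/-- A functor between sites is *continuous* if precomposition with it sends sheaves of types
to sheaves. -/
def ContinuousFunctor {C₁ C₂ : Type*} [Category C₁] [Category C₂]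
    (F : C₁ ⥤ C₂) (J₁ : GrothendieckTopology C₁) (J₂ : GrothendieckTopology C₂) : Prop :=
  ∀ G : C₂ᵒᵖ ⥤ Type u, Presheaf.IsSheaf J₂ G → Presheaf.IsSheaf J₁ (F.op ⋙ G)

/-- The direct image functor (precomposition, restricted to sheaves) of a continuous functor. -/
def pushforward {C₁ C₂ : Type*} [Category C₁] [Category C₂] (F : C₁ ⥤ C₂)
    (J₁ : GrothendieckTopology C₁) (J₂ : GrothendieckTopology C₂)
    (h : ContinuousFunctor.{u} F J₁ J₂) : Sheaf J₂ (Type u) ⥤ Sheaf J₁ (Type u) where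
  obj G := ⟨F.op ⋙ G.val, h G.val G.cond⟩
  map f := ⟨Functor.whiskerLeft F.op f.hom⟩

/-- A continuous functor is a *morphism of sites* if its direct image functor admits a
left adjoint (the sheafified left Kan extension) which preserves finite limits. -/
def IsMorphismOfSites {C₁ C₂ : Type*} [Category C₁] [Category C₂] (F : C₁ ⥤ C₂)
    (J₁ : GrothendieckTopology C₁) (J₂ : GrothendieckTopology C₂) : Prop :=
  ∃ h : ContinuousFunctor.{u} F J₁ J₂,
    ∃ (L : Sheaf J₁ (Type u) ⥤ Sheaf J₂ (Type u)) (_ : L ⊣ pushforward F J₁ J₂ h),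
      PreservesFiniteLimits L

/-- A morphism of sites is *dense* if its direct image functor is an equivalence. -/
def IsDenseMorphismOfSites {C₁ C₂ : Type*} [Category C₁] [Category C₂] (F : C₁ ⥤ C₂)
    (J₁ : GrothendieckTopology C₁) (J₂ : GrothendieckTopology C₂) : Prop :=
  IsMorphismOfSites.{u} F J₁ J₂ ∧
    ∃ h : ContinuousFunctor.{u} F J₁ J₂, (pushforward F J₁ J₂ h).IsEquivalence

variable {C₁ C₂ C₃ : Type*} [Category C₁] [Category C₂] [Category C₃]
  {J₁ : GrothendieckTopology C₁} {J₂ : GrothendieckTopology C₂} {J₃ : GrothendieckTopology C₃}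

def HasExactLeftAdjoint {A B : Type*} [Category A] [Category B] (R : A ⥤ B) : Prop :=
  ∃ (L : B ⥤ A) (_ : L ⊣ R), PreservesFiniteLimits L

theorem hasExactLeftAdjoint_comp_iff_of_isEquivalence {A B X : Type*} [Category A] [Category B]
    [Category X] (E : B ⥤ A) [E.IsEquivalence] (R : A ⥤ X) :
    HasExactLeftAdjoint (E ⋙ R) ↔ HasExactLeftAdjoint R := by
  constructor
  · rintro ⟨L, adj, hL⟩
    refine ⟨L ⋙ E, (adj.comp E.asEquivalence.toAdjunction).ofNatIsoRight ?_,
      comp_preservesFiniteLimits L E⟩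
    exact (Functor.associator _ _ _).symm ≪≫ Functor.isoWhiskerRight E.asEquivalence.counitIso R ≪≫
      Functor.leftUnitor R
  · rintro ⟨L, adj, hL⟩
    exact ⟨L ⋙ E.inv, adj.comp E.asEquivalence.symm.toAdjunction, comp_preservesFiniteLimits L _⟩

theorem isMorphismOfSites_iff {F : C₁ ⥤ C₂} :
    IsMorphismOfSites.{u} F J₁ J₂ ↔
      ∃ h : ContinuousFunctor.{u} F J₁ J₂, HasExactLeftAdjoint (pushforward F J₁ J₂ h) :=
  Iff.rfl

theorem ContinuousFunctor.comp {F : C₁ ⥤ C₂} {G : C₂ ⥤ C₃} (hF : ContinuousFunctor.{u} F J₁ J₂)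
    (hG : ContinuousFunctor.{u} G J₂ J₃) : ContinuousFunctor.{u} (F ⋙ G) J₁ J₃ :=
  fun P hP => hF (G.op ⋙ P) (hG P hP)

theorem pushforward_comp {F : C₁ ⥤ C₂} {G : C₂ ⥤ C₃} (hF : ContinuousFunctor.{u} F J₁ J₂)
    (hG : ContinuousFunctor.{u} G J₂ J₃) :
    pushforward (F ⋙ G) J₁ J₃ (hF.comp hG) = pushforward G J₂ J₃ hG ⋙ pushforward F J₁ J₂ hF :=
  rfl

/-- Every `J₂`-sheaf is, up to isomorphism, of the form `G.op ⋙ P` for a `J₃`-sheaf `P`. -/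
theorem ContinuousFunctor.of_comp_of_essSurj {F : C₁ ⥤ C₂} {G : C₂ ⥤ C₃}
    (hFG : ContinuousFunctor.{u} (F ⋙ G) J₁ J₃) (hG : ContinuousFunctor.{u} G J₂ J₃)
    [(pushforward G J₂ J₃ hG).EssSurj] : ContinuousFunctor.{u} F J₁ J₂ := by
  intro P hP
  let e := (sheafToPresheaf J₂ (Type u)).mapIso
    ((pushforward G J₂ J₃ hG).objObjPreimageIso ⟨P, hP⟩)
  have hsheaf := hFG _ ((pushforward G J₂ J₃ hG).objPreimage ⟨P, hP⟩).property
  exact (Presheaf.isSheaf_of_iso_iff (Functor.isoWhiskerLeft F.op e)).1 hsheaf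

theorem statement2 {C' C D' : Type u} [SmallCategory C'] [SmallCategory C] [SmallCategory D']
    (J' : GrothendieckTopology C') (J : GrothendieckTopology C)
    (K' : GrothendieckTopology D') (i : C' ⥤ C)
    (hi : IsDenseMorphismOfSites.{u} i J' J) (F' : D' ⥤ C') :
    IsMorphismOfSites.{u} F' K' J' ↔ IsMorphismOfSites.{u} (F' ⋙ i) K' J := by
  obtain ⟨-, hic, _⟩ := hi
  simp only [isMorphismOfSites_iff]
  constructor
  · rintro ⟨hF', hL⟩
    refine ⟨hF'.comp hic, ?_⟩
    rwa [pushforward_comp hF' hic, hasExactLeftAdjoint_comp_iff_of_isEquivalence]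
  · rintro ⟨hF'i, hL⟩
    have hF' := hF'i.of_comp_of_essSurj hic
    refine ⟨hF', ?_⟩
    rwa [pushforward_comp hF' hic, hasExactLeftAdjoint_comp_iff_of_isEquivalence] at hL

end Statement2
end

section
/- Let F : C' → C be a functor and ℂ a C-indexed category. The projection functor q_ℂ^F : 𝒢(ℂF) → 𝒢(ℂ) reflects cartesian arrows: a morphism g of 𝒢(ℂF) is cartesian with respect to the projection p_{ℂF} : 𝒢(ℂF) → C' if and only if its image q_ℂ^F(g) is cartesian with respect to the projection p_ℂ : 𝒢(ℂ) → C. -/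
/-!
In the Grothendieck construction an arrow is cartesian exactly when its fibre component is
invertible. As `𝒢(𝕏)` is realised as the opposite of Mathlib's covariant construction, this is
proved for cocartesian arrows there. Every arrow factors as the canonical cocartesian lift
`toTransport` of its base arrow followed by a vertical arrow, which is invertible exactly when the
fibre component is. Composites of cocartesian arrows are cocartesian, and if `t` and `t ≫ m` are
cocartesian and `m` lies over an isomorphism, then `m` is invertible. The projection `q_𝕏^F`
sends `(u, f')` to `(u, F f')`, so it does not change the fibre component, and both sides of the
equivalence say that `u` is invertible.
-/

open CategoryTheory CategoryTheory.Limits Opposite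

universe u

namespace Statement3

/-- The functor `Cat ⥤ Cat` sending a category to its opposite. -/
def catOp : Cat.{u, u} ⥤ Cat.{u, u} where
  obj A := Cat.of Aᵒᵖ
  map F := (Functor.op F.toFunctor).toCatHom

variable {C : Type u} [SmallCategory C]

/-- The (contravariant) Grothendieck construction `𝒢(𝕏)` of a `C`-indexed category
`𝕏 : Cᵒᵖ ⥤ Cat`: its objects are pairs `(x, c)` with `c` an object of `C` and `x` an object
of `𝕏(c)`, and its morphisms `(x, c) ⟶ (x', c')` are pairs `(u, f)` with `f : c ⟶ c'` in `C`
and `u : x ⟶ 𝕏(f)(x')` in `𝕏(c)`.  (It is realized as the opposite of Mathlib's covariant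
Grothendieck construction applied to the fibrewise-opposite of `𝕏`.) -/
abbrev Groth (𝕏 : Cᵒᵖ ⥤ Cat.{u, u}) : Type u :=
  (Grothendieck (𝕏 ⋙ catOp))ᵒᵖ

/-- The projection functor `p_𝕏 : 𝒢(𝕏) ⥤ C`, sending `(x, c)` to `c`. -/
def pProj (𝕏 : Cᵒᵖ ⥤ Cat.{u, u}) : Groth 𝕏 ⥤ C :=
  (Grothendieck.forget (𝕏 ⋙ catOp)).op ⋙ unopUnop C

/-- For a functor `F : C' ⥤ C`, the projection functor `q_𝕏^F : 𝒢(𝕏F) ⥤ 𝒢(𝕏)` of the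
pullback fibration, where `𝕏F := F.op ⋙ 𝕏 = 𝕏 ∘ Fᵒᵖ`; it sends `(x, c')` to `(x, F(c'))`
and `(u, f')` to `(u, F(f'))`. -/
def qProj {C' : Type u} [SmallCategory C'] (F : C' ⥤ C) (𝕏 : Cᵒᵖ ⥤ Cat.{u, u}) :
    Groth (F.op ⋙ 𝕏) ⥤ Groth 𝕏 :=
  (Grothendieck.pre (𝕏 ⋙ catOp) F.op).op

/-- An arrow `g : d' ⟶ d` is *cartesian* for `p : 𝒟 ⥤ 𝒞` if for every `h : p(d'') ⟶ p(d')`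
and every `k : d'' ⟶ d` with `h ≫ p(g) = p(k)` there is a unique `h' : d'' ⟶ d'` with
`p(h') = h` and `h' ≫ g = k`. -/
def IsCartesianArrow {𝒟 𝒞 : Type*} [Category 𝒟] [Category 𝒞] (p : 𝒟 ⥤ 𝒞)
    {d' d : 𝒟} (g : d' ⟶ d) : Prop :=
  ∀ ⦃d'' : 𝒟⦄ (h : p.obj d'' ⟶ p.obj d') (k : d'' ⟶ d),
    h ≫ p.map g = p.map k → ∃! h' : d'' ⟶ d', p.map h' = h ∧ h' ≫ g = k

def IsCocartesianArrow {𝒟 𝒞 : Type*} [Category 𝒟] [Category 𝒞] (p : 𝒟 ⥤ 𝒞)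
    {d d' : 𝒟} (g : d ⟶ d') : Prop :=
  ∀ ⦃d'' : 𝒟⦄ (h : p.obj d' ⟶ p.obj d'') (k : d ⟶ d''),
    p.map g ≫ h = p.map k → ∃! h' : d' ⟶ d'', p.map h' = h ∧ g ≫ h' = k

theorem isCartesianArrow_op_comp_unopUnop_iff {𝒟 𝒞 : Type*} [Category 𝒟] [Category 𝒞]
    (p : 𝒟 ⥤ 𝒞ᵒᵖ) {X Y : 𝒟ᵒᵖ} (g : X ⟶ Y) :
    IsCartesianArrow (p.op ⋙ unopUnop 𝒞) g ↔ IsCocartesianArrow p g.unop := by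
  constructor
  · intro H d'' h k hk
    obtain ⟨h', ⟨hp, hc⟩, huniq⟩ := H (d'' := op d'') h.unop k.op (congrArg Quiver.Hom.unop hk)
    refine ⟨h'.unop, ⟨congrArg Quiver.Hom.op hp, congrArg Quiver.Hom.unop hc⟩, ?_⟩
    rintro h'' ⟨hp', hc'⟩
    exact congrArg Quiver.Hom.unop
      (huniq h''.op ⟨congrArg Quiver.Hom.unop hp', congrArg Quiver.Hom.op hc'⟩)
  · intro H d'' h k hk
    obtain ⟨h', ⟨hp, hc⟩, huniq⟩ := H (d'' := d''.unop) h.op k.unop (congrArg Quiver.Hom.op hk)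
    refine ⟨h'.op, ⟨congrArg Quiver.Hom.unop hp, congrArg Quiver.Hom.op hc⟩, ?_⟩
    rintro h'' ⟨hp', hc'⟩
    exact congrArg Quiver.Hom.op
      (huniq h''.unop ⟨congrArg Quiver.Hom.op hp', congrArg Quiver.Hom.unop hc'⟩)

namespace IsCocartesianArrow

variable {𝒟 𝒞 : Type*} [Category 𝒟] [Category 𝒞] {p : 𝒟 ⥤ 𝒞}

theorem of_isIso {d d' : 𝒟} (g : d ⟶ d') [IsIso g] : IsCocartesianArrow p g := by
  intro d'' h k hk
  refine ⟨inv g ≫ k, ⟨?_, by simp⟩, fun h' ⟨_, hc⟩ => by simp [← hc]⟩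
  rw [p.map_comp, ← hk, p.map_inv, IsIso.inv_hom_id_assoc]

theorem comp {d₁ d₂ d₃ : 𝒟} {g₁ : d₁ ⟶ d₂} {g₂ : d₂ ⟶ d₃} (h₁ : IsCocartesianArrow p g₁)
    (h₂ : IsCocartesianArrow p g₂) : IsCocartesianArrow p (g₁ ≫ g₂) := by
  intro d'' h k hk
  have hk₁ : p.map g₁ ≫ p.map g₂ ≫ h = p.map k := by rw [← hk, p.map_comp, Category.assoc]
  obtain ⟨l, ⟨hlp, hlc⟩, -⟩ := h₁ _ k hk₁
  obtain ⟨m, ⟨hmp, hmc⟩, hmuniq⟩ := h₂ h l hlp.symm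
  refine ⟨m, ⟨hmp, by rw [Category.assoc, hmc, hlc]⟩, fun m' ⟨hp', hc'⟩ => hmuniq m' ⟨hp', ?_⟩⟩
  exact (h₁ _ k hk₁).unique ⟨by rw [p.map_comp, hp'], by rw [← Category.assoc, hc']⟩ ⟨hlp, hlc⟩

theorem isIso_of_comp {d₁ d₂ d₃ : 𝒟} {t : d₁ ⟶ d₂} {m : d₂ ⟶ d₃} (ht : IsCocartesianArrow p t)
    (htm : IsCocartesianArrow p (t ≫ m)) [IsIso (p.map m)] : IsIso m := by
  obtain ⟨m', ⟨hm'p, hm'c⟩, -⟩ := htm (inv (p.map m)) t (by simp)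
  rw [Category.assoc] at hm'c
  refine ⟨m', ?_, ?_⟩
  · exact (ht (𝟙 _) t (by simp)).unique ⟨by simp [hm'p], hm'c⟩
      ⟨p.map_id _, Category.comp_id _⟩
  · exact (htm (𝟙 _) (t ≫ m) (by simp)).unique
      ⟨by simp [hm'p], by rw [Category.assoc, reassoc_of% hm'c]⟩ ⟨p.map_id _, Category.comp_id _⟩

end IsCocartesianArrow

namespace Grothendieck

open CategoryTheory.Grothendieck (ι)

variable {D : Type*} [Category D] {Φ : D ⥤ Cat}

theorem exists_ι_map_eq {c : D} {a b : Φ.obj c}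
    (m : (ι Φ c).obj a ⟶ (ι Φ c).obj b) (hm : m.base = 𝟙 c) :
    ∃ φ, (ι Φ c).map φ = m :=
  ⟨eqToHom (by rw [hm]; exact (Functor.congr_obj (congrArg Cat.Hom.toFunctor (Φ.map_id c)) a).symm)
      ≫ m.fiber,
    Grothendieck.ext _ _ hm.symm
      (by erw [eqToHom_trans_assoc, eqToHom_trans_assoc, eqToHom_refl, Category.id_comp])⟩

instance (c : D) : (ι Φ c).ReflectsIsomorphisms where
  reflects {a b} φ _ := by
    have hbase : (inv ((ι Φ c).map φ)).base = 𝟙 c :=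
      (Category.id_comp _).symm.trans
        (congrArg Grothendieck.Hom.base (IsIso.hom_inv_id ((ι Φ c).map φ)))
    obtain ⟨ψ, hψ⟩ := exists_ι_map_eq _ hbase
    refine ⟨ψ, (ι Φ c).map_injective ?_, (ι Φ c).map_injective ?_⟩
    · rw [Functor.map_comp, hψ, IsIso.hom_inv_id, (ι Φ c).map_id]
    · rw [Functor.map_comp, hψ, IsIso.inv_hom_id, (ι Φ c).map_id]

def verticalPart {X Y : Grothendieck Φ} (f : X ⟶ Y) : X.transport f.base ⟶ Y :=
  (ι Φ Y.base).map f.fiber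

theorem toTransport_comp_verticalPart {X Y : Grothendieck Φ} (f : X ⟶ Y) :
    X.toTransport f.base ≫ verticalPart f = f := by
  fapply Grothendieck.ext
  · exact Category.comp_id f.base
  · show eqToHom _ ≫ eqToHom _ ≫ (Φ.map (𝟙 Y.base)).toFunctor.map
      (𝟙 ((Φ.map f.base).toFunctor.obj X.fiber)) ≫ eqToHom _ ≫ f.fiber = f.fiber
    rw [CategoryTheory.Functor.map_id (Φ.map (𝟙 Y.base)).toFunctor, Category.id_comp]
    erw [eqToHom_trans_assoc, eqToHom_trans_assoc, eqToHom_refl, Category.id_comp]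

theorem isIso_verticalPart_iff {X Y : Grothendieck Φ} (f : X ⟶ Y) :
    IsIso (verticalPart f) ↔ IsIso f.fiber :=
  ⟨fun h => have : IsIso ((ι Φ Y.base).map f.fiber) := h
    isIso_of_reflects_iso f.fiber (ι Φ Y.base),
   fun _ => (ι Φ Y.base).map_isIso f.fiber⟩

instance {X Y : Grothendieck Φ} (f : X ⟶ Y) :
    IsIso ((Grothendieck.forget Φ).map (verticalPart f)) :=
  inferInstanceAs (IsIso (𝟙 Y.base))

theorem isCocartesianArrow_toTransport (X : Grothendieck Φ) {c : D} (t : X.base ⟶ c) :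
    IsCocartesianArrow (Grothendieck.forget Φ) (X.toTransport t) := by
  show ∀ ⦃Z⦄ (h : (X.transport t).base ⟶ Z.base) (k : X ⟶ Z), (X.toTransport t).base ≫ h = k.base →
    ∃! h' : X.transport t ⟶ Z, h'.base = h ∧ X.toTransport t ≫ h' = k
  rintro Z h ⟨_, k⟩ rfl
  refine ⟨⟨h, eqToHom (by rw [Φ.map_comp]; rfl) ≫ k⟩, ⟨rfl, ?_⟩, ?_⟩
  · fapply Grothendieck.ext
    · rfl
    · show eqToHom _ ≫ eqToHom _ ≫ (Φ.map h).toFunctor.map (𝟙 (X.transport t).fiber) ≫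
        eqToHom _ ≫ k = k
      rw [CategoryTheory.Functor.map_id, Category.id_comp]
      erw [eqToHom_trans_assoc, eqToHom_trans_assoc, eqToHom_refl, Category.id_comp]
  · rintro ⟨b, k'⟩ ⟨hb, hk'⟩
    dsimp only at hb
    subst hb
    have hfib := Grothendieck.congr hk'
    change eqToHom _ ≫ (Φ.map _).toFunctor.map (𝟙 _) ≫ k' = eqToHom _ ≫ k at hfib
    rw [CategoryTheory.Functor.map_id, Category.id_comp] at hfib
    refine Grothendieck.ext _ _ rfl ?_
    rw [(eqToHom_comp_iff _ _ _).mp hfib]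
    erw [eqToHom_trans_assoc, eqToHom_trans_assoc]

theorem isCocartesianArrow_forget_iff {X Y : Grothendieck Φ} (f : X ⟶ Y) :
    IsCocartesianArrow (Grothendieck.forget Φ) f ↔ IsIso f.fiber := by
  rw [← isIso_verticalPart_iff]
  constructor
  · intro hf
    rw [← toTransport_comp_verticalPart f] at hf
    exact IsCocartesianArrow.isIso_of_comp (isCocartesianArrow_toTransport _ _) hf
  · intro _
    rw [← toTransport_comp_verticalPart f]
    exact (isCocartesianArrow_toTransport _ _).comp (.of_isIso _)

end Grothendieck

theorem isCartesianArrow_pProj_iff (𝕏 : Cᵒᵖ ⥤ Cat.{u, u}) {X Y : Groth 𝕏} (g : X ⟶ Y) :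
    IsCartesianArrow (pProj 𝕏) g ↔ IsIso g.unop.fiber :=
  (isCartesianArrow_op_comp_unopUnop_iff _ g).trans (Grothendieck.isCocartesianArrow_forget_iff _)

theorem statement3 {C' : Type u} [SmallCategory C'] (F : C' ⥤ C)
    (𝕏 : Cᵒᵖ ⥤ Cat.{u, u}) {X Y : Groth (F.op ⋙ 𝕏)} (g : X ⟶ Y) :
    IsCartesianArrow (pProj (F.op ⋙ 𝕏)) g ↔
      IsCartesianArrow (pProj 𝕏) ((qProj F 𝕏).map g) := by
  rw [isCartesianArrow_pProj_iff, isCartesianArrow_pProj_iff]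
  rfl

end Statement3
end

section
/- Let p : (D, K) → (C, J) and p' : (D', K') → (C', J') be comorphisms of sites between small sites, B : (C', J') → (C, J) a morphism of sites, A : (D', K') → (D, K) a continuous functor, and φ : p ∘ A ⟹ B ∘ p' a natural transformation. Let φ̃ : Sh(A)^* ∘ C_{p'}^* ⟹ C_p^* ∘ Sh(B)^* be the natural transformation induced as the mate of precomposition with φ. Then the η-extension Ã^* : (Sh(D', K')/C_{p'}^*) → (Sh(D, K)/C_p^*), which sends an object (F', E', α' : F' → C_{p'}^*(E')) to (Sh(A)^*(F'), Sh(B)^*(E'), φ̃_{E'} ∘ Sh(A)^*(α')), admits a right adjoint Ã_* : (Sh(D, K)/C_p^*) → (Sh(D', K')/C_{p'}^*); this right adjoint sends an object (F, E, α : F → C_p^*(E)) to the object whose second component is Sh(B)_*(E), whose first component is the pullback of Sh(A)_*(α) : Sh(A)_*(F) → Sh(A)_*(C_p^*(E)) along the canonical comparison map φ̄_E : C_{p'}^*(Sh(B)_*(E)) → Sh(A)_*(C_p^*(E)) (the mate of φ̃), and whose structure map is the corresponding pullback projection. -/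
/-!
STATEMENT 6: For comorphisms of sites `p : (D, K) → (C, J)`, `p' : (D', K') → (C', J')`,
a morphism of sites `B : (C', J') → (C, J)`, a continuous functor `A : (D', K') → (D, K)` and
a natural transformation `φ : p ∘ A ⟹ B ∘ p'`, the η-extension
`Ã^* : (Sh(D', K')/C_{p'}^*) ⥤ (Sh(D, K)/C_p^*)`,
`(F', E', α') ↦ (Sh(A)^*(F'), Sh(B)^*(E'), φ̃_{E'} ∘ Sh(A)^*(α'))`, admits a right adjoint
`Ã_*`, which sends `(F, E, α)` to the object with second component `Sh(B)_*(E)`, first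
component the pullback of `Sh(A)_*(α)` along the canonical comparison map
`φ̄_E : C_{p'}^*(Sh(B)_*(E)) ⟶ Sh(A)_*(C_p^*(E))` (the mate of `φ̃`), and structure map the
corresponding pullback projection.
-/

open CategoryTheory CategoryTheory.Limits Opposite

universe u

noncomputable section

namespace Statement6

variable {C D C' D' : Type u} [SmallCategory C] [SmallCategory D]
  [SmallCategory C'] [SmallCategory D']

/-- Precomposition with `F.op` on presheaves of types. -/
abbrev pre {X Y : Type u} [SmallCategory X] [SmallCategory Y] (F : X ⥤ Y) :
    (Yᵒᵖ ⥤ Type u) ⥤ (Xᵒᵖ ⥤ Type u) :=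
  (Functor.whiskeringLeft Xᵒᵖ Yᵒᵖ (Type u)).obj F.op

/-- For a comorphism of sites `p : (D, K) ⥤ (C, J)`, the functor
`C_p^* : Sh(C, J) ⥤ Sh(D, K)` given by precomposition with `p` followed by
`K`-sheafification. -/
def Cstar (J : GrothendieckTopology C) (p : D ⥤ C) (K : GrothendieckTopology D) :
    Sheaf J (Type u) ⥤ Sheaf K (Type u) :=
  sheafToPresheaf J (Type u) ⋙ pre p ⋙ presheafToSheaf K (Type u)

variable (J : GrothendieckTopology C) (K : GrothendieckTopology D)
  (J' : GrothendieckTopology C') (K' : GrothendieckTopology D')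
  (p : D ⥤ C) (p' : D' ⥤ C') (B : C' ⥤ C) (A : D' ⥤ D)

/-- The canonical comparison `pre A ⋙ a_{K'} ⟶ a_K ⋙ Sh(A)_*`, obtained as a mate of the
identity across the sheafification adjunctions. -/
def delta3 [Functor.IsContinuous.{u} A K' K] :
    pre A ⋙ presheafToSheaf K' (Type u) ⟶
      presheafToSheaf K (Type u) ⋙ A.sheafPushforwardContinuous (Type u) K' K :=
  ((mateEquiv (sheafificationAdjunction K (Type u))
      (sheafificationAdjunction K' (Type u))).symm
    (TwoSquare.mk _ _ _ _ (𝟙 (sheafToPresheaf K (Type u) ⋙ pre A)))).natTrans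

/-- Precomposition with `φ.op`, as a natural transformation between precomposition
functors on presheaf categories. -/
def theta (φ : A ⋙ p ⟶ p' ⋙ B) : pre B ⋙ pre p' ⟶ pre p ⋙ pre A :=
  (Functor.whiskeringLeft D'ᵒᵖ Cᵒᵖ (Type u)).map (NatTrans.op φ)

end Statement6

namespace Statement6

variable {C D C' D' : Type u} [SmallCategory C] [SmallCategory D]
  [SmallCategory C'] [SmallCategory D']
  (J : GrothendieckTopology C) (K : GrothendieckTopology D)
  (J' : GrothendieckTopology C') (K' : GrothendieckTopology D')
  (p : D ⥤ C) (p' : D' ⥤ C') (B : C' ⥤ C) (A : D' ⥤ D)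

/-- The canonical comparison `φ̄ : C_{p'}^* ∘ Sh(B)_* ⟶ Sh(A)_* ∘ C_p^*` induced by
precomposition with `φ`; it is the mate of `φ̃`. -/
def phiBar [Functor.IsContinuous.{u} A K' K] [Functor.IsContinuous.{u} B J' J]
    (φ : A ⋙ p ⟶ p' ⋙ B) :
    B.sheafPushforwardContinuous (Type u) J' J ⋙ Cstar J' p' K' ⟶
      Cstar J p K ⋙ A.sheafPushforwardContinuous (Type u) K' K :=
  Functor.whiskerRight (Functor.whiskerLeft (sheafToPresheaf J (Type u)) (theta p p' B A φ))
      (presheafToSheaf K' (Type u)) ≫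
    Functor.whiskerLeft (sheafToPresheaf J (Type u) ⋙ pre p) (delta3 K K' A)

/-- `φ̃ : Sh(A)^* ∘ C_{p'}^* ⟶ C_p^* ∘ Sh(B)^*`, the mate of `φ̄`. -/
def phiTilde [Functor.IsContinuous.{u} A K' K] [Functor.IsContinuous.{u} B J' J]
    (φ : A ⋙ p ⟶ p' ⋙ B) :
    Cstar J' p' K' ⋙ A.sheafPullback (Type u) K' K ⟶
      B.sheafPullback (Type u) J' J ⋙ Cstar J p K :=
  ((mateEquiv (B.sheafAdjunctionContinuous (Type u) J' J)
      (A.sheafAdjunctionContinuous (Type u) K' K)).symm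
    (TwoSquare.mk _ _ _ _ (phiBar J K J' K' p p' B A φ))).natTrans

end Statement6

namespace Statement6

variable {C D C' D' : Type u} [SmallCategory C] [SmallCategory D]
  [SmallCategory C'] [SmallCategory D']
  (J : GrothendieckTopology C) (K : GrothendieckTopology D)
  (J' : GrothendieckTopology C') (K' : GrothendieckTopology D')
  (p : D ⥤ C) (p' : D' ⥤ C') (B : C' ⥤ C) (A : D' ⥤ D)

/-- The η-extension of `(A, φ)`:
`(F', E', α') ↦ (Sh(A)^*(F'), Sh(B)^*(E'), φ̃_{E'} ∘ Sh(A)^*(α'))`. -/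
def etaExt [Functor.IsContinuous.{u} A K' K] [Functor.IsContinuous.{u} B J' J]
    (φ : A ⋙ p ⟶ p' ⋙ B) :
    Comma (𝟭 (Sheaf K' (Type u))) (Cstar J' p' K') ⥤
      Comma (𝟭 (Sheaf K (Type u))) (Cstar J p K) where
  obj X :=
    { left := (A.sheafPullback (Type u) K' K).obj X.left
      right := (B.sheafPullback (Type u) J' J).obj X.right
      hom := (A.sheafPullback (Type u) K' K).map X.hom ≫
        (phiTilde J K J' K' p p' B A φ).app X.right }
  map {X Y} m :=
    { left := (A.sheafPullback (Type u) K' K).map m.left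
      right := (B.sheafPullback (Type u) J' J).map m.right
      w := by
        have hw := m.w
        have hnat := (phiTilde J K J' K' p p' B A φ).naturality m.right
        simp only [Functor.id_map] at hw ⊢
        simp only [Functor.comp_map] at hnat
        rw [← Category.assoc, ← Functor.map_comp, hw, Functor.map_comp, Category.assoc,
          hnat, ← Category.assoc] }

end Statement6

namespace Statement6

variable {C D C' D' : Type u} [SmallCategory C] [SmallCategory D]
  [SmallCategory C'] [SmallCategory D']

/-- A functor `p : (D, K) → (C, J)` is a *comorphism of sites* if for every object `d` of `D`
and every `J`-covering sieve `S` on `p(d)` there is a `K`-covering sieve `S'` on `d` with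
`p(S') ⊆ S`. -/
def IsComorphismOfSites {C₁ C₂ : Type*} [Category C₁] [Category C₂] (p : C₁ ⥤ C₂)
    (K : GrothendieckTopology C₁) (J : GrothendieckTopology C₂) : Prop :=
  ∀ (d : C₁) (S : Sieve (p.obj d)), S ∈ J (p.obj d) →
    ∃ S' ∈ K d, ∀ ⦃d' : C₁⦄ (g : d' ⟶ d), S' g → S (p.map g)

end Statement6

/-!
The η-extension is the functor `Comma.map` induced by the 2-cell `φ̃` between the adjunctions
`Sh(A)^* ⊣ Sh(A)_*` and `Sh(B)^* ⊣ Sh(B)_*`. Transposing both components of a comma morphism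
`(u, v) : (Sh(A)^* F', Sh(B)^* E', φ̃ ∘ Sh(A)^* α') ⟶ (F, E, α)` across these adjunctions turns
its commutativity condition into `Sh(A)_* α ∘ u♭ = φ̄_E ∘ C_{p'}^*(v♭) ∘ α'`, where `φ̄` is the
mate of `φ̃`. Such data are exactly maps from `(F', E', α')` to the pullback of `Sh(A)_* α`
along `φ̄_E`, and this correspondence is natural in `(F', E', α')`.
-/

namespace CategoryTheory

theorem homEquiv_comp_map_eq_map_comp_mateEquiv {C₁ D₁ E₁ F₁ : Type*}
    [Category C₁] [Category D₁] [Category E₁] [Category F₁]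
    {G : C₁ ⥤ E₁} {H : D₁ ⥤ F₁} {L₁ : C₁ ⥤ D₁} {R₁ : D₁ ⥤ C₁} {L₂ : E₁ ⥤ F₁} {R₂ : F₁ ⥤ E₁}
    (adj₁ : L₁ ⊣ R₁) (adj₂ : L₂ ⊣ R₂) (γ : G ⋙ L₂ ⟶ L₁ ⋙ H)
    {X : C₁} {Y : D₁} (u : L₁.obj X ⟶ Y) :
    adj₂.homEquiv _ _ (γ.app X ≫ H.map u) =
      G.map (adj₁.homEquiv _ _ u) ≫ (mateEquiv adj₁ adj₂ γ).app Y := by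
  have hunit := unit_mateEquiv adj₁ adj₂ γ X
  have hnat := (mateEquiv adj₁ adj₂ γ).naturality u
  simp only [Functor.id_obj, Functor.comp_obj, Functor.comp_map] at hunit hnat
  rw [Adjunction.homEquiv_unit, Adjunction.homEquiv_unit, R₂.map_comp, ← Category.assoc,
    ← hunit, G.map_comp, Category.assoc, Category.assoc, hnat]

namespace Comma

variable {𝒜 𝒜' ℬ ℬ' : Type*} [Category 𝒜] [Category 𝒜'] [Category ℬ] [Category ℬ']
  {G : ℬ ⥤ 𝒜} {G' : ℬ' ⥤ 𝒜'} {LA : 𝒜' ⥤ 𝒜} {RA : 𝒜 ⥤ 𝒜'} {LB : ℬ' ⥤ ℬ} {RB : ℬ ⥤ ℬ'}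
  (adjA : LA ⊣ RA) (adjB : LB ⊣ RB) (γ : G' ⋙ LA ⟶ LB ⋙ G)

theorem comm_iff_homEquiv_comm {X' : Comma (𝟭 𝒜') G'} {X : Comma (𝟭 𝒜) G}
    (u : LA.obj X'.left ⟶ X.left) (v : LB.obj X'.right ⟶ X.right) :
    u ≫ X.hom = LA.map X'.hom ≫ γ.app X'.right ≫ G.map v ↔
      adjA.homEquiv _ _ u ≫ RA.map X.hom =
        X'.hom ≫ G'.map (adjB.homEquiv _ _ v) ≫ (mateEquiv adjB adjA γ).app X.right := by
  rw [← Adjunction.homEquiv_naturality_right, ← homEquiv_comp_map_eq_map_comp_mateEquiv,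
    ← Adjunction.homEquiv_naturality_left]
  exact (adjA.homEquiv _ _).apply_eq_iff_eq.symm

abbrev mapOfSquare : Comma (𝟭 𝒜') G' ⥤ Comma (𝟭 𝒜) G :=
  map (F₁ := LA) (F := LA) (𝟙 LA) γ

variable [HasPullbacks 𝒜']

abbrev pullbackMateObj (X : Comma (𝟭 𝒜) G) : Comma (𝟭 𝒜') G' where
  left := pullback ((mateEquiv adjB adjA γ).app X.right) (RA.map X.hom)
  right := RB.obj X.right
  hom := pullback.fst _ _

def mapHomEquiv (X' : Comma (𝟭 𝒜') G') (X : Comma (𝟭 𝒜) G) :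
    ((mapOfSquare γ).obj X' ⟶ X) ≃ (X' ⟶ pullbackMateObj adjA adjB γ X) where
  toFun m :=
    { left := pullback.lift (X'.hom ≫ G'.map (adjB.homEquiv _ _ m.right))
        (adjA.homEquiv _ _ m.left) (by
          have hw : m.left ≫ X.hom = LA.map X'.hom ≫ γ.app X'.right ≫ G.map m.right := by
            simpa using m.w
          rw [Category.assoc]
          exact ((comm_iff_homEquiv_comm adjA adjB γ m.left m.right).mp hw).symm)
      right := adjB.homEquiv _ _ m.right
      w := pullback.lift_fst _ _ _ }
  invFun n :=
    { left := (adjA.homEquiv _ _).symm (n.left ≫ pullback.snd _ _)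
      right := (adjB.homEquiv _ _).symm n.right
      w := by
        have hw : n.left ≫ pullback.fst _ _ = X'.hom ≫ G'.map n.right := n.w
        have h := (comm_iff_homEquiv_comm adjA adjB γ
          ((adjA.homEquiv _ _).symm (n.left ≫ pullback.snd _ _))
          ((adjB.homEquiv _ _).symm n.right)).mpr (by
            rw [Equiv.apply_symm_apply, Equiv.apply_symm_apply, Category.assoc,
              ← pullback.condition, reassoc_of% hw])
        simpa using h }
  left_inv m := by
    ext
    · dsimp only
      erw [pullback.lift_snd]
      exact Equiv.symm_apply_apply _ _
    · exact Equiv.symm_apply_apply _ _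
  right_inv n := by
    ext
    · erw [pullback.lift_fst]
      simpa using n.w.symm
    · erw [pullback.lift_snd]
      exact Equiv.apply_symm_apply _ _
    · simp

theorem mapHomEquiv_naturality_left {X'' X' : Comma (𝟭 𝒜') G'} {X : Comma (𝟭 𝒜) G}
    (f : X'' ⟶ X') (m : (mapOfSquare γ).obj X' ⟶ X) :
    mapHomEquiv adjA adjB γ X'' X ((mapOfSquare γ).map f ≫ m) =
      f ≫ mapHomEquiv adjA adjB γ X' X m := by
  have hf : f.left ≫ X'.hom = X''.hom ≫ G'.map f.right := f.w
  ext
  · erw [pullback.lift_fst, Category.assoc, pullback.lift_fst]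
    simp [Adjunction.homEquiv_naturality_left, reassoc_of% hf]
  · erw [pullback.lift_snd, Category.assoc, pullback.lift_snd]
    simp [Adjunction.homEquiv_naturality_left]
  · simp [mapHomEquiv, Adjunction.homEquiv_naturality_left]

def pullbackMate : Comma (𝟭 𝒜) G ⥤ Comma (𝟭 𝒜') G' :=
  Adjunction.rightAdjointOfEquiv (mapHomEquiv adjA adjB γ)
    (fun _ _ _ => mapHomEquiv_naturality_left adjA adjB γ)

theorem isPullback_pullbackMate_obj (X : Comma (𝟭 𝒜) G) :
    IsPullback ((pullbackMate adjA adjB γ).obj X).hom (pullback.snd _ _)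
      ((mateEquiv adjB adjA γ).app X.right) (RA.map X.hom) :=
  IsPullback.of_hasPullback _ _

def mapOfSquareAdjunction : mapOfSquare γ ⊣ pullbackMate adjA adjB γ :=
  Adjunction.adjunctionOfEquivRight _ _

end Comma

end CategoryTheory

namespace Statement6

variable {C D C' D' : Type u} [SmallCategory C] [SmallCategory D]
  [SmallCategory C'] [SmallCategory D']

section

variable (J : GrothendieckTopology C) (K : GrothendieckTopology D)
  (J' : GrothendieckTopology C') (K' : GrothendieckTopology D')
  (p : D ⥤ C) (p' : D' ⥤ C') (B : C' ⥤ C) (A : D' ⥤ D)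
  [Functor.IsContinuous.{u} A K' K] [Functor.IsContinuous.{u} B J' J]
  (φ : A ⋙ p ⟶ p' ⋙ B)

theorem mateEquiv_phiTilde :
    mateEquiv (B.sheafAdjunctionContinuous (Type u) J' J)
      (A.sheafAdjunctionContinuous (Type u) K' K) (phiTilde J K J' K' p p' B A φ) =
      phiBar J K J' K' p p' B A φ :=
  Equiv.apply_symm_apply _ _

def etaExtIsoMapOfSquare :
    etaExt J K J' K' p p' B A φ ≅ Comma.mapOfSquare (phiTilde J K J' K' p p' B A φ) :=
  NatIso.ofComponents (fun _ => Comma.isoMk (Iso.refl _) (Iso.refl _) (by simp [etaExt]))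

end

theorem statement6_general
    (J : GrothendieckTopology C) (K : GrothendieckTopology D)
    (J' : GrothendieckTopology C') (K' : GrothendieckTopology D')
    (p : D ⥤ C) (p' : D' ⥤ C') (B : C' ⥤ C) (A : D' ⥤ D)
    [Functor.IsContinuous.{u} A K' K] [Functor.IsContinuous.{u} B J' J]
    (φ : A ⋙ p ⟶ p' ⋙ B) :
    ∃ (R : Comma (𝟭 (Sheaf K (Type u))) (Cstar J p K) ⥤
        Comma (𝟭 (Sheaf K' (Type u))) (Cstar J' p' K'))
      (_ : etaExt J K J' K' p p' B A φ ⊣ R),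
      ∀ X : Comma (𝟭 (Sheaf K (Type u))) (Cstar J p K),
        ∃ (e : (R.obj X).right ≅ (B.sheafPushforwardContinuous (Type u) J' J).obj X.right)
          (snd : (R.obj X).left ⟶ (A.sheafPushforwardContinuous (Type u) K' K).obj X.left),
          IsPullback ((R.obj X).hom ≫ (Cstar J' p' K').map e.hom) snd
            ((phiBar J K J' K' p p' B A φ).app X.right)
            ((A.sheafPushforwardContinuous (Type u) K' K).map X.hom) := by
  refine ⟨Comma.pullbackMate (A.sheafAdjunctionContinuous (Type u) K' K)
      (B.sheafAdjunctionContinuous (Type u) J' J) (phiTilde J K J' K' p p' B A φ),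
    (Comma.mapOfSquareAdjunction _ _ _).ofNatIsoLeft
      (etaExtIsoMapOfSquare J K J' K' p p' B A φ).symm,
    fun X => ⟨Iso.refl _, ?_, ?isPullback⟩⟩
  case isPullback =>
    rw [Iso.refl_hom]
    erw [CategoryTheory.Functor.map_id, Category.comp_id]
    rw [← mateEquiv_phiTilde]
    exact Comma.isPullback_pullbackMate_obj _ _ (phiTilde J K J' K' p p' B A φ) X

theorem statement6
    (J : GrothendieckTopology C) (K : GrothendieckTopology D)
    (J' : GrothendieckTopology C') (K' : GrothendieckTopology D')
    (p : D ⥤ C) (p' : D' ⥤ C') (B : C' ⥤ C) (A : D' ⥤ D)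
    (hp : IsComorphismOfSites p K J) (hp' : IsComorphismOfSites p' K' J')
    [Functor.IsContinuous.{u} A K' K] [Functor.IsContinuous.{u} B J' J]
    (hB : PreservesFiniteLimits (B.sheafPullback (Type u) J' J))
    (φ : A ⋙ p ⟶ p' ⋙ B) :
    ∃ (R : Comma (𝟭 (Sheaf K (Type u))) (Cstar J p K) ⥤
        Comma (𝟭 (Sheaf K' (Type u))) (Cstar J' p' K'))
      (_ : etaExt J K J' K' p p' B A φ ⊣ R),
      ∀ X : Comma (𝟭 (Sheaf K (Type u))) (Cstar J p K),
        ∃ (e : (R.obj X).right ≅ (B.sheafPushforwardContinuous (Type u) J' J).obj X.right)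
          (snd : (R.obj X).left ⟶ (A.sheafPushforwardContinuous (Type u) K' K).obj X.left),
          IsPullback ((R.obj X).hom ≫ (Cstar J' p' K').map e.hom) snd
            ((phiBar J K J' K' p p' B A φ).app X.right)
            ((A.sheafPushforwardContinuous (Type u) K' K).map X.hom) :=
  statement6_general J K J' K' p p' B A φ

end Statement6
end
end
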